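/- For θ > 0, the function f : [a,b] → ℝ given by f(x) = x for x ≤ −θ, f(x) = (x−θ)/2 for −θ < x < θ, and f(x) = 0 for x ≥ θ, equals −(1/2)σ(−x−θ) − (1/2)σ(−x+θ) where σ = ReLU, and any ReLU network realizing f requires at least 2 layers and at least 4 computational units (counting input and output units). -/
import Mathlib


/-- The CPWL function of Example `SNN-ReLU`: `f(x) = x` for `x ≤ −θ`,
`f(x) = (x−θ)/2` for `−θ < x < θ`, `f(x) = 0` for `x ≥ θ`. -/
noncomputable def pwfun (θ x : ℝ) : ℝ :=
  if x ≤ -θ then x else if x < θ then (x - θ) / 2 else 0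

/-- Hidden-layer iteration of a general ReLU ANN with layer widths `n l`. -/
noncomputable def annIterG (n : ℕ → ℕ) (A : ∀ l, Fin (n (l+1)) → Fin (n l) → ℝ)
    (B : ∀ l, Fin (n (l+1)) → ℝ) : ∀ l, (Fin (n 0) → ℝ) → (Fin (n l) → ℝ)
  | 0 => fun x => x
  | (l+1) => fun x i => max 0 ((∑ j, A l i j * annIterG n A B l x j) + B l i)

/-- Realization of a ReLU ANN with `Lh` hidden ReLU layers followed by a final
affine layer (total depth `Lh + 1`). -/
noncomputable def annRealG (n : ℕ → ℕ) (Lh : ℕ) (A : ∀ l, Fin (n (l+1)) → Fin (n l) → ℝ)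
    (B : ∀ l, Fin (n (l+1)) → ℝ) (x : Fin (n 0) → ℝ) : Fin (n (Lh+1)) → ℝ :=
  fun i => (∑ j, A Lh i j * annIterG n A B Lh x j) + B Lh i

/-- for `θ > 0`, `pwfun θ` equals
`−(1/2)σ(−x−θ) − (1/2)σ(−x+θ)` with `σ = ReLU`, and any ReLU network realizing
it on `[a,b]` (with `a < −θ`, `θ < b`) requires at least `2` layers and at least
`4` computational units (counting input and output units). -/

lemma sum_fin_one' {m : ℕ} (hm : m = 1) (g : Fin m → ℝ) :
    ∑ j, g j = g ⟨0, by omega⟩ := by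
  subst hm; simp

lemma iter_const' (n : ℕ → ℕ) (A : ∀ l, Fin (n (l+1)) → Fin (n l) → ℝ)
    (B : ∀ l, Fin (n (l+1)) → ℝ) {l : ℕ} (h0 : n l = 0) {m : ℕ} (hlm : l ≤ m)
    (x y : Fin (n 0) → ℝ) :
    annIterG n A B m x = annIterG n A B m y := by
  induction m, hlm using Nat.le_induction with
  | base => funext j; exact absurd j.isLt (by omega)
  | succ m hm ih => funext i; simp only [annIterG, ih]

lemma affine_contra' (θ a : ℝ) (hθ : 0 < θ) (ha : a < -θ) (c k : ℝ)
    (e1 : a = c * a + k) (e2 : -θ = c * (-θ) + k) (e3 : (0:ℝ) = c * θ + k) : False := by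
  have h1 : (c - 1) * (a + θ) = 0 := by linear_combination e2 - e1
  have h2 : (2 * c - 1) * θ = 0 := by linear_combination e2 - e3
  rcases mul_eq_zero.mp h1 with h | h
  · rcases mul_eq_zero.mp h2 with h' | h' <;> nlinarith
  · linarith

lemma relu_contra' (θ a b : ℝ) (hθ : 0 < θ) (ha : a < -θ) (hb : θ < b) (c d e k : ℝ)
    (H : ∀ x ∈ Set.Icc a b, pwfun θ x = c * max 0 (d * x + e) + k) : False := by
  have hab : a ≤ b := by linarith
  have Ea : a = c * max 0 (d * a + e) + k := by
    have := H a ⟨le_rfl, hab⟩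
    rwa [pwfun, if_pos ha.le] at this
  have Em : -θ = c * max 0 (d * (-θ) + e) + k := by
    have := H (-θ) ⟨ha.le, by linarith⟩
    rwa [pwfun, if_pos le_rfl] at this
  have E0 : -(θ/2) = c * max 0 (d * 0 + e) + k := by
    have := H 0 ⟨by linarith, by linarith⟩
    rw [pwfun, if_neg (by linarith), if_pos hθ] at this
    linarith
  have Et : 0 = c * max 0 (d * θ + e) + k := by
    have := H θ ⟨by linarith, hb.le⟩
    rwa [pwfun, if_neg (by linarith), if_neg (lt_irrefl θ)] at this
  have Eb : 0 = c * max 0 (d * b + e) + k := by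
    have := H b ⟨hab, le_rfl⟩
    rwa [pwfun, if_neg (by linarith), if_neg (by linarith)] at this
  rcases lt_trichotomy d 0 with hd | hd | hd
  · rcases le_or_gt e 0 with he | he
    · rw [max_eq_left (by nlinarith)] at E0 Et
      rw [mul_zero] at E0 Et
      linarith
    · rw [max_eq_right (by nlinarith)] at Ea Em E0
      have h1 : (c * d - 1) * (a + θ) = 0 := by linear_combination Em - Ea
      have h2 : (2 * (c * d) - 1) * θ = 0 := by linear_combination 2 * Em - 2 * E0
      rcases mul_eq_zero.mp h1 with h | h
      · rcases mul_eq_zero.mp h2 with h' | h' <;> nlinarith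
      · linarith
  · subst hd
    simp only [zero_mul, zero_add] at Em E0
    linarith
  · rcases le_or_gt e 0 with he | he
    · rw [max_eq_left (by nlinarith)] at Ea Em
      rw [mul_zero] at Ea Em
      linarith
    · rw [max_eq_right (by nlinarith)] at Et Eb
      have h1 : (c * d) * (b - θ) = 0 := by linear_combination Et - Eb
      rcases mul_eq_zero.mp h1 with h | h
      · rcases mul_eq_zero.mp h with h' | h'
        · rw [h'] at E0 Et
          rw [zero_mul] at E0 Et
          linarith
        · linarith
      · linarith

theorem stmt18 (θ a b : ℝ) (hθ : 0 < θ) (ha : a < -θ) (hb : θ < b) :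
    (∀ x ∈ Set.Icc a b,
      pwfun θ x = -(1/2) * max 0 (-x - θ) - (1/2) * max 0 (-x + θ)) ∧
    (∀ (Lh : ℕ) (n : ℕ → ℕ) (A : ∀ l, Fin (n (l+1)) → Fin (n l) → ℝ)
        (B : ∀ l, Fin (n (l+1)) → ℝ),
      n 0 = 1 → n (Lh + 1) = 1 →
      (∀ x ∈ Set.Icc a b, annRealG n Lh A B (fun _ => x) = fun _ => pwfun θ x) →
      2 ≤ Lh + 1 ∧ 4 ≤ ∑ l ∈ Finset.range (Lh + 2), n l) := by
  have pa : pwfun θ a = a := by rw [pwfun, if_pos ha.le]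
  have pb : pwfun θ b = 0 := by
    rw [pwfun, if_neg (by linarith), if_neg (by linarith)]
  constructor
  · intro x _
    rw [pwfun]
    split_ifs with h1 h2
    · rw [max_eq_right (by linarith), max_eq_right (by linarith)]; ring
    · rw [max_eq_left (by linarith), max_eq_right (by linarith)]; ring
    · rw [max_eq_left (by linarith), max_eq_left (by linarith)]; ring
  · intro Lh n A B hn0 hnL hreal
    -- no layer up to Lh can be empty
    have hcons : ∀ l, l ≤ Lh → n l ≠ 0 := by
      intro l hl h0
      have hiter := iter_const' n A B h0 hl (fun _ => a) (fun _ => b)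
      have hA := congrFun (hreal a ⟨le_rfl, by linarith⟩) ⟨0, by omega⟩
      have hB := congrFun (hreal b ⟨by linarith, le_rfl⟩) ⟨0, by omega⟩
      have hab : pwfun θ a = pwfun θ b := by
        rw [← hA, ← hB]
        unfold annRealG
        rw [hiter]
      rw [pa, pb] at hab
      linarith
    -- at least one hidden layer
    have hL1 : 1 ≤ Lh := by
      by_contra hcon
      have hLh : Lh = 0 := by omega
      subst hLh
      have hn1 : n 1 = 1 := hnL
      have i1 : Fin (n 1) := ⟨0, by omega⟩
      have key : ∀ x ∈ Set.Icc a b,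
          pwfun θ x = A 0 i1 ⟨0, by omega⟩ * x + B 0 i1 := by
        intro x hx
        have h := congrFun (hreal x hx) i1
        rw [← h]
        unfold annRealG
        rw [sum_fin_one' hn0 (fun j => A 0 i1 j * annIterG n A B 0 (fun _ => x) j)]
        rfl
      exact affine_contra' θ a hθ ha _ _
        (by rw [← key a ⟨le_rfl, by linarith⟩, pa])
        (by rw [← key (-θ) ⟨ha.le, by linarith⟩, pwfun, if_pos le_rfl])
        (by rw [← key θ ⟨by linarith, hb.le⟩, pwfun, if_neg (by linarith),
              if_neg (lt_irrefl θ)])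
    refine ⟨by omega, ?_⟩
    rcases eq_or_lt_of_le hL1 with hL | hL
    · -- Lh = 1 : need n 1 ≥ 2
      subst hL
      have hn1pos : 1 ≤ n 1 := Nat.one_le_iff_ne_zero.mpr (hcons 1 le_rfl)
      have hn2 : n 2 = 1 := hnL
      by_contra hsum
      have hn1 : n 1 = 1 := by
        simp only [Finset.sum_range_succ, Finset.sum_range_one] at hsum
        omega
      have i0 : Fin (n 0) := ⟨0, by omega⟩
      have i1 : Fin (n 1) := ⟨0, by omega⟩
      have i2 : Fin (n 2) := ⟨0, by omega⟩
      refine relu_contra' θ a b hθ ha hb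
        (A 1 i2 i1) (A 0 i1 i0) (B 0 i1) (B 1 i2) ?_
      intro x hx
      have h := congrFun (hreal x hx) i2
      rw [← h]
      unfold annRealG
      rw [sum_fin_one' hn1 (fun j => A 1 i2 j * annIterG n A B 1 (fun _ => x) j)]
      have hi1 : (⟨0, by omega⟩ : Fin (n 1)) = i1 := by
        apply Fin.ext
        omega
      rw [hi1]
      congr 2
      show max 0 ((∑ j, A 0 i1 j * annIterG n A B 0 (fun _ => x) j)
          + B 0 i1) = _
      rw [sum_fin_one' hn0 (fun j => A 0 i1 j * annIterG n A B 0 (fun _ => x) j)]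
      have hi0 : (⟨0, by omega⟩ : Fin (n 0)) = i0 := by
        apply Fin.ext
        omega
      rw [hi0]
      rfl
    · -- Lh ≥ 2 : every layer has at least one unit
      have hall : ∀ l ∈ Finset.range (Lh + 2), 1 ≤ n l := by
        intro l hl
        rw [Finset.mem_range] at hl
        rcases Nat.lt_or_ge l (Lh + 1) with h | h
        · exact Nat.one_le_iff_ne_zero.mpr (hcons l (by omega))
        · have hl' : l = Lh + 1 := by omega
          rw [hl', hnL]
      calc (4:ℕ) ≤ Lh + 2 := by omega
        _ = ∑ _l ∈ Finset.range (Lh + 2), 1 := by simp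
        _ ≤ ∑ l ∈ Finset.range (Lh + 2), n l := Finset.sum_le_sum hall
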